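/- arXiv:2601.06930 — 2 statements merged into one kernel-verified Lean document; each statement's English description precedes it below -/
import Mathlib

section
/- Let T be an LR tableau of shape λ/μ and even weight ν on [2n] with ℓ(μ) ≤ n. If T(n+t,1) is even and strictly less than 2t for some t ≥ 1, then there exists s with 1 ≤ s < t such that T(n+s,1) is odd and strictly less than 2s+1. -/
/-- A partition: weakly decreasing, eventually-zero sequence of naturals.
`part k` is the `k`-th part (1-indexed; `part 0` is a dummy value ≥ `part 1`). -/
structure YPart where
  part : ℕ → ℕ
  antitone : ∀ i j : ℕ, i ≤ j → part j ≤ part i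
  evZero : ∃ N, ∀ k, N ≤ k → part k = 0

/-- The number of nonzero parts (length) of a partition. -/
noncomputable def YPart.len (p : YPart) : ℕ := sSup {k | 1 ≤ k ∧ p.part k ≠ 0}

/-- Containment of partitions (Young diagrams). -/
def YPart.Sub (m l : YPart) : Prop := ∀ k, m.part k ≤ l.part k

/-- A partition is even if `ν_{2i-1} = ν_{2i}` for all `i ≥ 1`. -/
def YPart.IsEven (p : YPart) : Prop := ∀ i : ℕ, p.part (2*i+1) = p.part (2*i+2)

/-- The empty partition. -/
def YPart.zero : YPart := ⟨fun _ => 0, fun _ _ _ => Nat.le_refl 0, ⟨0, fun _ _ => rfl⟩⟩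

/-- Cell `(k,j)` (1-indexed, matrix style) lies in the skew shape `λ/μ`. -/
def InShape (l m : YPart) (k j : ℕ) : Prop :=
  1 ≤ k ∧ m.part k < j ∧ j ≤ l.part k

/-- A semistandard skew tableau of shape `λ/μ` with entries in `[N] = {1,…,N}`;
entries outside the skew shape (including the cells of `μ`) are normalized to `0`. -/
structure IsSSYT (l m : YPart) (N : ℕ) (T : ℕ → ℕ → ℕ) : Prop where
  pos : ∀ k j, InShape l m k j → 1 ≤ T k j ∧ T k j ≤ N
  rowLe : ∀ k j, InShape l m k j → InShape l m k (j+1) → T k j ≤ T k (j+1)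
  colLt : ∀ k j, InShape l m k j → InShape l m (k+1) j → T k j < T (k+1) j
  outside : ∀ k j, ¬ InShape l m k j → T k j = 0

/-- The number of cells of `λ/μ` with entry `i` whose position satisfies `P`. -/
noncomputable def cnt (l m : YPart) (T : ℕ → ℕ → ℕ) (P : ℕ → ℕ → Prop) (i : ℕ) : ℕ :=
  {c : ℕ × ℕ | InShape l m c.1 c.2 ∧ T c.1 c.2 = i ∧ P c.1 c.2}.ncard

/-- A Littlewood–Richardson tableau of shape `λ/μ` and weight `ν` on `[N]`:
a semistandard skew tableau whose reverse row reading word (rows right to left,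
top to bottom) is Yamanouchi of weight `ν`.  The Yamanouchi condition is stated
on all prefixes of the reverse row word: a prefix ends at a cell `(k,j)` and
consists of all cells in earlier rows together with the cells `(k,b)`, `b ≥ j`. -/
structure IsLR (l m nu : YPart) (N : ℕ) (T : ℕ → ℕ → ℕ) : Prop where
  ssyt : IsSSYT l m N T
  weight : ∀ i, 1 ≤ i → cnt l m T (fun _ _ => True) i = nu.part i
  yam : ∀ k j i, 1 ≤ i →
    cnt l m T (fun a b => a < k ∨ (a = k ∧ j ≤ b)) (i+1) ≤
    cnt l m T (fun a b => a < k ∨ (a = k ∧ j ≤ b)) i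

/-- The Sundaram property: every odd entry `2i+1` lies in row `n+i` or above. -/
def Sundaram (n : ℕ) (l m : YPart) (T : ℕ → ℕ → ℕ) : Prop :=
  ∀ k j i, InShape l m k j → T k j = 2*i + 1 → k ≤ n + i

/-- A Sundaram violation occurs in row `k`: some odd entry `2i+1` appears in row
`k` with `k > n+i`. -/
def SundViolRow (n : ℕ) (l m : YPart) (T : ℕ → ℕ → ℕ) (k : ℕ) : Prop :=
  ∃ j i, InShape l m k j ∧ T k j = 2*i + 1 ∧ n + i < k

/-- The symplectic (King/Kwon) condition on a straight-shape tableau `G` of shape `g`: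
`G(k,1) ≥ 2k−1` for every row `k` of `g`. -/
def IsSymplectic (g : YPart) (G : ℕ → ℕ → ℕ) : Prop :=
  ∀ k, 1 ≤ k → k ≤ g.len → 2*k - 1 ≤ G k 1

/-- Row `i` of the partition `μ^{(mm)}` in the left-companion chain of `T`:
with `mm = 2n - r + 1`, the partition `μ^{(mm)}` is the shape occupied by the
entries `< r` (including the `0`-entries on the cells of `μ`) in rows
`r, r+1, …, 2n` of `T`; its `i`-th row comes from row `2n - mm + i` of `T`. -/
noncomputable def compShape (l : YPart) (T : ℕ → ℕ → ℕ) (n mm i : ℕ) : ℕ :=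
  {j : ℕ | 1 ≤ j ∧ j ≤ l.part (2*n - mm + i) ∧ T (2*n - mm + i) j < 2*n - mm + 1}.ncard

/-- The length (number of nonzero rows) of a shape given by its row-length function. -/
noncomputable def shapeLen (f : ℕ → ℕ) : ℕ := sSup {i | 1 ≤ i ∧ f i ≠ 0}

/-- The entry of the left companion tableau `G_μ(T)` in cell `(k,j)`:
the least `mm` such that `(k,j)` is a cell of `μ^{(mm)}`. -/
noncomputable def leftCompanion (l : YPart) (T : ℕ → ℕ → ℕ) (n k j : ℕ) : ℕ :=
  sInf {mm | j ≤ compShape l T n mm k}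

/-!
Going down the first column from row `n+1`, the entries strictly increase, and the cells are all
in `λ/μ` because `ℓ(μ) ≤ n`. If no entry `T(n+s,1)` with `s < t` were an odd number `≤ 2s-1`,
induction would give `T(n+s,1) ≥ 2s-1` for all `s ≤ t`, with equality impossible for `s < t`;
so `T(n+t,1) ≥ 2t-1`, which together with `T(n+t,1) < 2t` forces `T(n+t,1) = 2t-1`, odd.
-/

theorem YPart.part_eq_zero_of_len_lt (p : YPart) {k : ℕ} (hk : p.len < k) : p.part k = 0 := by
  by_contra hne
  obtain ⟨N, hN⟩ := p.evZero
  have hbdd : BddAbove {k | 1 ≤ k ∧ p.part k ≠ 0} :=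
    ⟨N, fun m hm => by by_contra hm'; exact hm.2 (hN m (by omega))⟩
  have : k ≤ p.len := le_csSup hbdd ⟨by omega, hne⟩
  omega

theorem InShape.one_of_le_row {l m : YPart} {k k' : ℕ} (h : InShape l m k' 1) (hk : 1 ≤ k)
    (hkk' : k ≤ k') (hm : m.len < k) : InShape l m k 1 :=
  ⟨hk, by rw [m.part_eq_zero_of_len_lt hm]; omega, h.2.2.trans (l.antitone k k' hkk')⟩

section StrictlyIncreasing

variable {a : ℕ → ℕ} {t : ℕ}

theorem two_mul_le_succ_of_forall_odd (h1 : 1 ≤ a 1)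
    (hmono : ∀ s, 1 ≤ s → s < t → a s < a (s + 1))
    (hodd : ∀ s, 1 ≤ s → s < t → Odd (a s) → 2 * s + 1 ≤ a s) :
    ∀ s, 1 ≤ s → s ≤ t → 2 * s ≤ a s + 1 := by
  intro s hs
  induction s, hs using Nat.le_induction with
  | base => intro; omega
  | succ s hs ih =>
    intro hst
    have hlow := ih (by omega)
    have hne : a s ≠ 2 * s - 1 := fun heq =>
      absurd (hodd s hs (by omega) ⟨s - 1, by omega⟩) (by omega)
    have := hmono s hs (by omega)
    omega

theorem exists_odd_lt_of_even_lt (h1 : 1 ≤ a 1) (hmono : ∀ s, 1 ≤ s → s < t → a s < a (s + 1))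
    (ht : 1 ≤ t) (hev : Even (a t)) (hlt : a t < 2 * t) :
    ∃ s, 1 ≤ s ∧ s < t ∧ Odd (a s) ∧ a s < 2 * s + 1 := by
  by_contra hcon
  push Not at hcon
  have hlow := two_mul_le_succ_of_forall_odd h1 hmono hcon t ht le_rfl
  obtain ⟨r, hr⟩ := hev
  omega

end StrictlyIncreasing

theorem stmt9_general (n : ℕ) (lam mu nu : YPart)
    (hmu : mu.len ≤ n) (T : ℕ → ℕ → ℕ)
    (hT : IsLR lam mu nu (2*n) T)
    (t : ℕ) (ht : 1 ≤ t) (hrow : InShape lam mu (n+t) 1)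
    (hev : Even (T (n+t) 1)) (hlt : T (n+t) 1 < 2*t) :
    ∃ s, 1 ≤ s ∧ s < t ∧ Odd (T (n+s) 1) ∧ T (n+s) 1 < 2*s + 1 := by
  have hcol : ∀ s, 1 ≤ s → s ≤ t → InShape lam mu (n + s) 1 := fun s hs hst =>
    hrow.one_of_le_row (by omega) (by omega) (by omega)
  refine exists_odd_lt_of_even_lt (a := fun s => T (n + s) 1)
    (hT.ssyt.pos _ _ (hcol 1 le_rfl ht)).1 (fun s hs hst => ?_) ht hev hlt
  exact hT.ssyt.colLt _ _ (hcol s hs hst.le) (hcol (s + 1) (by omega) hst)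

/-- In an LR tableau of even weight with `ℓ(μ) ≤ n`, if `T(n+t,1)`
is even and `< 2t` for some `t ≥ 1`, then `T(n+s,1)` is odd and `< 2s+1` for
some `1 ≤ s < t`. -/
theorem stmt9 (n : ℕ) (lam mu nu : YPart) (hl : lam.len ≤ 2*n) (hsub : mu.Sub lam)
    (hmu : mu.len ≤ n) (hnu : nu.IsEven) (T : ℕ → ℕ → ℕ)
    (hT : IsLR lam mu nu (2*n) T)
    (t : ℕ) (ht : 1 ≤ t) (hrow : InShape lam mu (n+t) 1)
    (hev : Even (T (n+t) 1)) (hlt : T (n+t) 1 < 2*t) :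
    ∃ s, 1 ≤ s ∧ s < t ∧ Odd (T (n+s) 1) ∧ T (n+s) 1 < 2*s + 1 :=
  stmt9_general n lam mu nu hmu T hT t ht hrow hev hlt
end

section
/- Let T be an LR tableau of shape λ/μ and even weight ν on the alphabet [2n] with ℓ(μ) ≤ n, and let G_μ(T) be its left companion. Then T fails the Sundaram property if and only if G_μ(T) fails the symplectic condition. Moreover, in that case, if n+t+1 is the minimal row of T with a Sundaram violation (t ≥ 0), then the maximal row of G_μ(T) with a symplectic violation lies in one of the cells (ℓ(μ),1), (ℓ(μ)−1,1), …, (ℓ(μ)−t,1) of the first column of G_μ(T). -/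
/-! Both failures are witnessed by a first-column cell `(ρ,1)` of `λ/μ` with `T(ρ,1) ≤ 2(ρ-n-1)`.
Under the Sundaram property `T(ρ,1) ≥ 2(ρ-n)` all down the first column, by induction: the
entry `2(ρ-n)-1` in row `ρ` would be an odd violation; so no such cell exists. Conversely a
violation `2i+1` in row `k > n+i` gives `T(k,1) ≤ 2(k-n)-1`, and in the odd borderline case the
Yamanouchi condition together with `ν_{2i+1} = ν_{2i+2}` forces the entry `2i+2` directly below.
On the companion side, `G(κ,1) ≤ 2κ-2` says exactly that some row `ρ ≥ 2n+2-κ` of `T` starts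
with an entry `≤ ρ-κ`, so such a cell in row `ρ` is a symplectic violation in row `2n+2-ρ`. -/

namespace YPart

variable (p : YPart)

lemma bddAbove_support : BddAbove {k | 1 ≤ k ∧ p.part k ≠ 0} := by
  obtain ⟨N, hN⟩ := p.evZero
  exact ⟨N, fun k hk => by by_contra h; exact hk.2 (hN k (by omega))⟩

variable {p}

lemma le_len {k : ℕ} (hk : 1 ≤ k) (h : p.part k ≠ 0) : k ≤ p.len :=
  le_csSup p.bddAbove_support ⟨hk, h⟩

lemma part_eq_zero_of_len_lt_s18 {k : ℕ} (h : p.len < k) : p.part k = 0 := by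
  by_contra hne
  exact absurd (p.le_len (by omega) hne) (by omega)

lemma part_ne_zero_of_le_len {k : ℕ} (hk : 1 ≤ k) (h : k ≤ p.len) : p.part k ≠ 0 := by
  intro hzero
  have hbound : p.len ≤ k - 1 := csSup_le' fun k' hk' => by
    by_contra hlt
    exact hk'.2 (Nat.eq_zero_of_le_zero (hzero ▸ p.antitone k k' (by omega)))
  omega

end YPart

section Shape

variable {l m : YPart} {k k' j j' : ℕ}

lemma InShape.of_len_lt (hk : m.len < k) (hj : 1 ≤ j) (hj' : j ≤ l.part k) : InShape l m k j :=
  ⟨by omega, by rw [m.part_eq_zero_of_len_lt_s18 hk]; omega, hj'⟩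

lemma InShape.len_lt (h : InShape l m k 1) : m.len < k := by
  by_contra hle
  exact m.part_ne_zero_of_le_len h.1 (by omega) (by have := h.2.1; omega)

lemma InShape.le_len (h : InShape l m k j) : k ≤ l.len :=
  l.le_len h.1 (by have := h.2.1; have := h.2.2; omega)

lemma InShape.of_le_col (h : InShape l m k j) (hj : j ≤ j') (hj' : j' ≤ l.part k) :
    InShape l m k j' :=
  ⟨h.1, h.2.1.trans_le hj, hj'⟩

lemma InShape.of_le_row (h : InShape l m k j) (hk : k ≤ k') (hj : j ≤ l.part k') :
    InShape l m k' j :=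
  ⟨h.1.trans hk, (m.antitone k k' hk).trans_lt h.2.1, hj⟩

lemma setOf_inShape_finite (l m : YPart) : {c : ℕ × ℕ | InShape l m c.1 c.2}.Finite :=
  (Set.finite_Icc ((0, 0) : ℕ × ℕ) (l.len, l.part 0)).subset fun c hc =>
    ⟨Prod.mk_le_mk.mpr ⟨Nat.zero_le _, Nat.zero_le _⟩,
      Prod.mk_le_mk.mpr ⟨hc.le_len, hc.2.2.trans (l.antitone 0 c.1 (Nat.zero_le _))⟩⟩

end Shape

namespace IsSSYT

variable {l m : YPart} {N : ℕ} {T : ℕ → ℕ → ℕ} {k k' j j' : ℕ}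

lemma le_of_le_col (hS : IsSSYT l m N T) (h : InShape l m k j) (hj : j ≤ j')
    (hj' : j' ≤ l.part k) : T k j ≤ T k j' := by
  induction j', hj using Nat.le_induction with
  | base => exact le_rfl
  | succ j' hjj' ih =>
    exact (ih (by omega)).trans
      (hS.rowLe k j' (h.of_le_col hjj' (by omega)) (h.of_le_col (by omega) hj'))

lemma first_col_le (hS : IsSSYT l m N T) (hj : 1 ≤ j) (hj' : j ≤ l.part k) : T k 1 ≤ T k j := by
  by_cases h : InShape l m k 1
  · exact hS.le_of_le_col h hj hj'
  · exact (hS.outside k 1 h).trans_le (Nat.zero_le _)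

lemma add_le_of_le_row (hS : IsSSYT l m N T) (h : InShape l m k j) (hk : k ≤ k')
    (hj : j ≤ l.part k') : T k j + (k' - k) ≤ T k' j := by
  induction k', hk using Nat.le_induction with
  | base => simp
  | succ k' hkk' ih =>
    have hj'' : j ≤ l.part k' := hj.trans (l.antitone k' (k' + 1) (by omega))
    have := hS.colLt k' j (h.of_le_row hkk' hj'') (h.of_le_row (by omega) hj)
    have := ih hj''
    omega

lemma sub_len_le_first_col (hS : IsSSYT l m N T) (h : InShape l m k 1) : k - m.len ≤ T k 1 := by
  have hk := h.len_lt
  have htop : InShape l m (m.len + 1) 1 :=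
    InShape.of_len_lt (by omega) le_rfl (h.2.2.trans (l.antitone _ _ (by omega)))
  have := hS.add_le_of_le_row htop (by omega : m.len + 1 ≤ k) h.2.2
  have := (hS.pos _ _ htop).1
  omega

end IsSSYT

section Count

variable {l m : YPart} {T : ℕ → ℕ → ℕ} {P : ℕ → ℕ → Prop} {i : ℕ}

lemma cnt_eq_cnt_true (h : ∀ a b, InShape l m a b → T a b = i → P a b) :
    cnt l m T P i = cnt l m T (fun _ _ => True) i := by
  unfold cnt
  congr 1
  ext c
  simpa using fun hc hi => h c.1 c.2 hc hi

lemma cnt_lt_cnt_true {a b : ℕ} (hab : InShape l m a b) (hi : T a b = i) (hP : ¬ P a b) :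
    cnt l m T P i < cnt l m T (fun _ _ => True) i :=
  Set.ncard_lt_ncard
    ⟨fun _ hc => ⟨hc.1, hc.2.1, trivial⟩,
      fun hsub => hP (hsub (show (a, b) ∈ _ from ⟨hab, hi, trivial⟩)).2.2⟩
    ((setOf_inShape_finite l m).subset fun _ hc => hc.1)

end Count

theorem IsLR.first_col_succ_of_odd {l m nu : YPart} {N : ℕ} {T : ℕ → ℕ → ℕ} {k i : ℕ}
    (hnu : nu.IsEven) (hT : IsLR l m nu N T) (hk : InShape l m k 1) (hodd : T k 1 = 2*i + 1) :
    InShape l m (k+1) 1 ∧ T (k+1) 1 = 2*i + 2 := by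
  by_contra hcon
  -- the Yamanouchi prefix ending at `(k,2)` contains every `2i+2` but misses the `2i+1` at `(k,1)`
  have hprefix : ∀ a b, InShape l m a b → T a b = 2*i + 2 → a < k ∨ (a = k ∧ 2 ≤ b) := by
    intro a b hab hab'
    rcases lt_trichotomy a k with ha | rfl | ha
    · exact Or.inl ha
    · refine Or.inr ⟨rfl, ?_⟩
      by_contra hb
      have : b = 1 := by have := hab.2.1; omega
      subst this
      omega
    · exfalso
      have hb : 1 ≤ b := by have := hab.2.1; omega
      have hbelow : InShape l m (k+1) 1 :=
        hk.of_le_row (by omega) (hb.trans (hab.2.2.trans (l.antitone _ _ ha)))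
      have := hT.ssyt.colLt k 1 hk hbelow
      have := hT.ssyt.add_le_of_le_row hbelow ha (hb.trans hab.2.2)
      have := hT.ssyt.first_col_le hb hab.2.2
      have : T (k+1) 1 ≠ 2*i + 2 := fun he => hcon ⟨hbelow, he⟩
      omega
  have hyam := hT.yam k 2 (2*i + 1) (by omega)
  rw [show 2*i + 1 + 1 = 2*i + 2 by ring, cnt_eq_cnt_true hprefix, hT.weight _ (by omega)] at hyam
  have hlt := cnt_lt_cnt_true (P := fun a b => a < k ∨ (a = k ∧ 2 ≤ b)) hk hodd (by omega)
  rw [hT.weight _ (by omega)] at hlt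
  have := hnu i
  omega

def LowFirstCol (n : ℕ) (l m : YPart) (T : ℕ → ℕ → ℕ) (ρ : ℕ) : Prop :=
  InShape l m ρ 1 ∧ T ρ 1 + 2*n + 2 ≤ 2*ρ

section Sundaram

variable {n N : ℕ} {l m nu : YPart} {T : ℕ → ℕ → ℕ}

lemma IsSSYT.two_mul_le_first_col_of_sundaram (hS : IsSSYT l m N T) (hmu : m.len ≤ n)
    (hSund : Sundaram n l m T) : ∀ ρ, InShape l m ρ 1 → 2*ρ ≤ T ρ 1 + 2*n
  | 0, _ => by omega
  | ρ + 1, h => by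
    by_cases hρ : ρ < n
    · omega
    have hstep : 2*ρ + 1 ≤ T (ρ+1) 1 + 2*n := by
      by_cases hρ' : ρ = n
      · have := (hS.pos _ _ h).1
        omega
      have habove : InShape l m ρ 1 :=
        .of_len_lt (by omega) le_rfl (h.2.2.trans (l.antitone _ _ (by omega)))
      have := hS.two_mul_le_first_col_of_sundaram hmu hSund ρ habove
      have := hS.colLt ρ 1 habove h
      omega
    have hne : T (ρ+1) 1 ≠ 2*(ρ - n) + 1 := fun he => by
      have := hSund _ _ _ h he
      omega
    omega

lemma exists_lowFirstCol_of_sundViolRow (hmu : m.len ≤ n) (hnu : nu.IsEven)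
    (hT : IsLR l m nu N T) {k : ℕ} (hv : SundViolRow n l m T k) :
    ∃ ρ ≤ k + 1, LowFirstCol n l m T ρ := by
  obtain ⟨j, i, hsh, hodd, hik⟩ := hv
  have hj : 1 ≤ j := by have := hsh.2.1; omega
  have hfirst : InShape l m k 1 := .of_len_lt (by omega) le_rfl (hj.trans hsh.2.2)
  have := hT.ssyt.first_col_le hj hsh.2.2
  by_cases hborder : T k 1 = 2*(k - n - 1) + 1
  · obtain ⟨hbelow, heven⟩ := hT.first_col_succ_of_odd hnu hfirst hborder
    exact ⟨k + 1, le_rfl, hbelow, by omega⟩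
  · exact ⟨k, by omega, hfirst, by omega⟩

theorem not_sundaram_iff_exists_lowFirstCol (hmu : m.len ≤ n) (hnu : nu.IsEven)
    (hT : IsLR l m nu N T) : ¬ Sundaram n l m T ↔ ∃ ρ, LowFirstCol n l m T ρ := by
  constructor
  · intro hns
    simp only [Sundaram, not_forall, exists_prop, not_le] at hns
    obtain ⟨k, j, i, hsh, hodd, hik⟩ := hns
    exact (exists_lowFirstCol_of_sundViolRow hmu hnu hT ⟨j, i, hsh, hodd, hik⟩).imp
      fun _ h => h.2
  · rintro ⟨ρ, hsh, hlow⟩ hSund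
    have := hT.ssyt.two_mul_le_first_col_of_sundaram hmu hSund ρ hsh
    omega

end Sundaram

section Companion

variable {n N : ℕ} {lam mu : YPart} {T : ℕ → ℕ → ℕ} {mm k : ℕ}

lemma one_le_compShape_iff (hS : IsSSYT lam mu N T) :
    1 ≤ compShape lam T n mm k ↔
      1 ≤ lam.part (2*n - mm + k) ∧ T (2*n - mm + k) 1 < 2*n - mm + 1 := by
  have hfin : {j | 1 ≤ j ∧ j ≤ lam.part (2*n - mm + k) ∧
      T (2*n - mm + k) j < 2*n - mm + 1}.Finite :=
    (Set.finite_Icc 1 (lam.part (2*n - mm + k))).subset fun _ hj => ⟨hj.1, hj.2.1⟩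
  change 0 < Set.ncard _ ↔ _
  rw [Set.ncard_pos hfin]
  constructor
  · rintro ⟨j, hj, hjl, hjT⟩
    exact ⟨hj.trans hjl, (hS.first_col_le hj hjl).trans_lt hjT⟩
  · rintro ⟨hl, hT⟩
    exact ⟨1, le_rfl, hl, hT⟩

lemma one_le_compShape_leftCompanion (hS : IsSSYT lam mu N T) (hsub : mu.Sub lam)
    (hk : 1 ≤ k) (hkmu : k ≤ mu.len) :
    1 ≤ compShape lam T n (leftCompanion lam T n k 1) k := by
  have hμ := mu.part_ne_zero_of_le_len hk hkmu
  refine Nat.sInf_mem (s := {mm | 1 ≤ compShape lam T n mm k}) ⟨2*n, ?_⟩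
  change 1 ≤ compShape lam T n (2*n) k
  rw [one_le_compShape_iff hS, Nat.sub_self, zero_add,
    hS.outside k 1 fun h => by have := h.2.1; omega]
  exact ⟨(Nat.one_le_iff_ne_zero.mpr hμ).trans (hsub k), Nat.zero_lt_one⟩

lemma exists_leftCompanion_lt_of_lowFirstCol (hl : lam.len ≤ 2*n) (hS : IsSSYT lam mu N T)
    {ρ : ℕ} (hlow : LowFirstCol n lam mu T ρ) :
    ∃ κ, ρ + κ = 2*n + 2 ∧ 1 ≤ κ ∧ κ ≤ mu.len ∧ leftCompanion lam T n κ 1 < 2*κ - 1 := by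
  obtain ⟨hsh, hT⟩ := hlow
  have := hsh.le_len
  have := hS.sub_len_le_first_col hsh
  refine ⟨2*n + 2 - ρ, by omega, by omega, by omega, ?_⟩
  have hmem : 1 ≤ compShape lam T n (2*(2*n + 2 - ρ) - 2) (2*n + 2 - ρ) := by
    rw [one_le_compShape_iff hS, show 2*n - (2*(2*n + 2 - ρ) - 2) + (2*n + 2 - ρ) = ρ by omega]
    exact ⟨hsh.2.2, by omega⟩
  have := Nat.sInf_le (s := {mm | 1 ≤ compShape lam T n mm (2*n + 2 - ρ)}) hmem
  exact this.trans_lt (by omega)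

lemma exists_lowFirstCol_of_leftCompanion_lt (hsub : mu.Sub lam) (hmu : mu.len ≤ n)
    (hS : IsSSYT lam mu N T) (hk : 1 ≤ k) (hkmu : k ≤ mu.len)
    (hviol : leftCompanion lam T n k 1 < 2*k - 1) : ∃ ρ, LowFirstCol n lam mu T ρ := by
  obtain ⟨hl, hT⟩ :=
    (one_le_compShape_iff hS).mp (one_le_compShape_leftCompanion (n := n) hS hsub hk hkmu)
  exact ⟨2*n - leftCompanion lam T n k 1 + k, .of_len_lt (by omega) le_rfl hl, by omega⟩

theorem not_isSymplectic_iff_exists_lowFirstCol (hl : lam.len ≤ 2*n) (hsub : mu.Sub lam)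
    (hmu : mu.len ≤ n) (hS : IsSSYT lam mu N T) :
    ¬ IsSymplectic mu (leftCompanion lam T n) ↔ ∃ ρ, LowFirstCol n lam mu T ρ := by
  constructor
  · intro hns
    simp only [IsSymplectic, not_forall, not_le] at hns
    obtain ⟨k, hk, hkmu, hviol⟩ := hns
    exact exists_lowFirstCol_of_leftCompanion_lt hsub hmu hS hk hkmu hviol
  · rintro ⟨ρ, hlow⟩ hsymp
    obtain ⟨κ, -, hκ, hκmu, hviol⟩ := exists_leftCompanion_lt_of_lowFirstCol hl hS hlow
    exact (hsymp κ hκ hκmu).not_gt hviol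

end Companion

/-- Main Theorem: An LR tableau `T` of even weight with
`ℓ(μ) ≤ n` fails the Sundaram property iff its left companion `G_μ(T)` fails
the symplectic condition; and if `n+t+1` is the minimal row of `T` with a
Sundaram violation, then the maximal row of `G_μ(T)` with a symplectic
violation is among the cells `(ℓ(μ),1), (ℓ(μ)−1,1), …, (ℓ(μ)−t,1)`. -/
theorem stmt18 (n : ℕ) (lam mu nu : YPart) (hl : lam.len ≤ 2*n)
    (hsub : mu.Sub lam) (hmu : mu.len ≤ n) (hnu : nu.IsEven) (T : ℕ → ℕ → ℕ)
    (hT : IsLR lam mu nu (2*n) T) :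
    (¬ Sundaram n lam mu T ↔ ¬ IsSymplectic mu (leftCompanion lam T n)) ∧
    (∀ t : ℕ, SundViolRow n lam mu T (n+t+1) →
      (∀ k, k < n+t+1 → ¬ SundViolRow n lam mu T k) →
      ∃ r, mu.len - t ≤ r ∧ r ≤ mu.len ∧
        leftCompanion lam T n r 1 < 2*r - 1 ∧
        ∀ k, r < k → k ≤ mu.len → 2*k - 1 ≤ leftCompanion lam T n k 1) := by
  refine ⟨(not_sundaram_iff_exists_lowFirstCol hmu hnu hT).trans
    (not_isSymplectic_iff_exists_lowFirstCol hl hsub hmu hT.ssyt).symm, fun t hv _ => ?_⟩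
  obtain ⟨ρ, hρ, hlow⟩ := exists_lowFirstCol_of_sundViolRow hmu hnu hT hv
  obtain ⟨κ, hρκ, -, hκmu, hviol⟩ := exists_leftCompanion_lt_of_lowFirstCol hl hT.ssyt hlow
  classical
  let violates (k : ℕ) : Prop := leftCompanion lam T n k 1 < 2*k - 1
  have hκr := Nat.le_findGreatest (P := violates) hκmu hviol
  exact ⟨Nat.findGreatest violates mu.len, by omega, Nat.findGreatest_le _,
    Nat.findGreatest_spec (P := violates) hκmu hviol,
    fun k hk hkmu => not_lt.mp (Nat.findGreatest_is_greatest (P := violates) hk hkmu)⟩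
end
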